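/- arXiv:2512.16996 — 5 statements merged into one kernel-verified Lean document; each statement's English description precedes it below -/
import Mathlib

section
/- The map ∂_ε is a derivation of the loop algebra 𝔡[t,t⁻¹], i.e. ∂_ε([u,v]) = [∂_ε u, v] + [u, ∂_ε v] for all u,v ∈ 𝔡[t,t⁻¹]; moreover, for every ℓ ∈ ℂ it is compatible with the cocycle ω_ℓ in the sense that ω_ℓ(∂_ε u, v) + ω_ℓ(u, ∂_ε v) = 0 for all u,v, so that ∂_ε extends to a derivation of the central extension 𝔡[t,t⁻¹] ⊕ ℂc_ℓ acting by zero on c_ℓ. -/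
open scoped TensorProduct

noncomputable section

variable (L : Type) [LieRing L] [LieAlgebra ℂ L]

attribute [local instance 100] LieRing.ofAssociativeRing

/-- The coadjoint action of `L` on its dual space: `(coad L x f) z = -f ⁅x, z⁆`. -/
def coad : L →ₗ[ℂ] Module.Dual ℂ L →ₗ[ℂ] Module.Dual ℂ L :=
  -(Module.Dual.transpose (R := ℂ) ∘ₗ (LieAlgebra.ad ℂ L).toLinearMap)

variable {L}

lemma coad_apply (x : L) (f : Module.Dual ℂ L) (z : L) :
    coad L x f z = -f ⁅x, z⁆ := by
  simp [coad, Module.Dual.transpose_apply]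

lemma coad_lie (x y : L) :
    coad L ⁅x, y⁆ = coad L x ∘ₗ coad L y - coad L y ∘ₗ coad L x := by
  ext f z
  simp only [coad_apply, LinearMap.sub_apply, LinearMap.comp_apply]
  rw [leibniz_lie x y z, map_add]
  ring

variable (L)

/-- The bracket of the cotangent Lie algebra `T*𝔤 = 𝔤 ⋉ 𝔤*`:
`[(x,f),(y,g)] = ([x,y], x•g − y•f)`. -/
def dbkt (a b : L × Module.Dual ℂ L) : L × Module.Dual ℂ L :=
  (⁅a.1, b.1⁆, coad L a.1 b.2 - coad L b.1 a.2)

instance cotLieRing : LieRing (L × Module.Dual ℂ L) :=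
  { (inferInstance : AddCommGroup (L × Module.Dual ℂ L)) with
    bracket := dbkt L
    add_lie := by
      intro a b c
      show dbkt L (a + b) c = dbkt L a c + dbkt L b c
      simp only [dbkt, Prod.fst_add, Prod.snd_add, Prod.mk_add_mk, add_lie, map_add,
        LinearMap.add_apply, Prod.mk.injEq]
      exact ⟨trivial, by abel⟩
    lie_add := by
      intro a b c
      show dbkt L a (b + c) = dbkt L a b + dbkt L a c
      simp only [dbkt, Prod.fst_add, Prod.snd_add, Prod.mk_add_mk, lie_add, map_add,
        LinearMap.add_apply, Prod.mk.injEq]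
      exact ⟨trivial, by abel⟩
    lie_self := by
      intro a
      show dbkt L a a = 0
      simp [dbkt, Prod.ext_iff]
    leibniz_lie := by
      intro a b c
      show dbkt L a (dbkt L b c) = dbkt L (dbkt L a b) c + dbkt L b (dbkt L a c)
      simp only [dbkt, Prod.mk_add_mk, Prod.mk.injEq, coad_lie, map_sub,
        LinearMap.sub_apply, LinearMap.comp_apply]
      exact ⟨leibniz_lie a.1 b.1 c.1, by abel⟩ }

instance cotLieAlgebra : LieAlgebra ℂ (L × Module.Dual ℂ L) :=
  { (inferInstance : Module ℂ (L × Module.Dual ℂ L)) with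
    lie_smul := by
      intro t a b
      show dbkt L a (t • b) = t • dbkt L a b
      simp only [dbkt, Prod.smul_fst, Prod.smul_snd, Prod.smul_mk, lie_smul, map_smul,
        LinearMap.smul_apply, Prod.mk.injEq, smul_sub] }

@[simp] lemma cot_bracket_def (a b : L × Module.Dual ℂ L) :
    ⁅a, b⁆ = (⁅a.1, b.1⁆, coad L a.1 b.2 - coad L b.1 a.2) := rfl

end

noncomputable section LoopModel

/-- The loop algebra `𝔡[t,t⁻¹]` of the cotangent Lie algebra `𝔡 = T*𝔤`, modelled as finitely
supported functions `ℤ → 𝔡` (the value at `n` being the coefficient of `tⁿ`). -/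
abbrev LoopD (L : Type) [LieRing L] [LieAlgebra ℂ L] := ℤ →₀ (L × Module.Dual ℂ L)

variable {L : Type} [LieRing L] [LieAlgebra ℂ L]

/-- The Lie bracket of the loop algebra: `[a⊗tⁿ, b⊗tᵐ] = [a,b]⊗tⁿ⁺ᵐ`. -/
def loopBr (u v : LoopD L) : LoopD L :=
  u.sum fun n a => v.sum fun m b => Finsupp.single (n + m) ⁅a, b⁆

/-- The canonical pairing form `κ₀` on `𝔡`: `κ₀((x,f),(y,g)) = f(y) + g(x)`. -/
def kappa0 (a b : L × Module.Dual ℂ L) : ℂ :=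
  a.2 b.1 + b.2 a.1

/-- The form `κ_ℓ = κ₀ + ℓ·κ_𝔤` on `𝔡`, the Killing form of `𝔤` being extended by zero. -/
def kappaL (ℓ : ℂ) (a b : L × Module.Dual ℂ L) : ℂ :=
  kappa0 a b + ℓ * killingForm ℂ L a.1 b.1

/-- The derivation `∂_ε` of `𝔡[t,t⁻¹]`: `∂_ε((x,f)⊗tⁿ) = n·(0,ψ(x))⊗tⁿ⁻¹`, where
`ψ(x) = κ_𝔤(x,−)`. -/
def depsLoop (u : LoopD L) : LoopD L :=
  u.sum fun n a =>
    Finsupp.single (n - 1) ((n : ℂ) • (((0 : L), killingForm ℂ L a.1) : L × Module.Dual ℂ L))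

/-- The derivation `∂_t` of `𝔡[t,t⁻¹]`: `∂_t(a⊗tⁿ) = n·a⊗tⁿ⁻¹`. -/
def dtLoop (u : LoopD L) : LoopD L :=
  u.sum fun n a => Finsupp.single (n - 1) ((n : ℂ) • a)

/-- `∂_s = ∂_t + s·∂_ε`. -/
def dsLoop (s : ℂ) (u : LoopD L) : LoopD L :=
  dtLoop u + s • depsLoop u

/-- The 2-cocycle `ω_ℓ(a⊗tⁿ, b⊗tᵐ) = n·δ_{n+m,0}·κ_ℓ(a,b)` on `𝔡[t,t⁻¹]`. -/
def omegaL (ℓ : ℂ) (u v : LoopD L) : ℂ :=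
  u.sum fun n a => (n : ℂ) * kappaL ℓ a (v (-n))

/-- The bracket of the central extension `𝔡[t,t⁻¹] ⊕ ℂc_ℓ`. -/
def extBr (ℓ : ℂ) (A B : LoopD L × ℂ) : LoopD L × ℂ :=
  (loopBr A.1 B.1, omegaL ℓ A.1 B.1)

/-- The extension of `∂_ε` to `𝔡[t,t⁻¹] ⊕ ℂc_ℓ` acting by zero on `c_ℓ`. -/
def extDeps (A : LoopD L × ℂ) : LoopD L × ℂ :=
  (depsLoop A.1, 0)

end LoopModel

/-!
Write `∂_ε = ε ⊗ d/dt` with `ε (x, f) = (0, ψ x)` (`killingEps`). Invariance of the Killing form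
makes `ψ` a `𝔤`-module map, `ψ ⁅x, y⁆ = x • ψ y`, so `ε` commutes with every `ad a`:
`ε ⁅a, b⁆ = ⁅ε a, b⁆ = ⁅a, ε b⁆`. On monomials the derivation identity is then the Leibniz rule
`(n + m) tⁿ⁺ᵐ⁻¹ = n tⁿ⁻¹ tᵐ + m tⁿ tᵐ⁻¹`. Symmetry of the Killing form gives
`κ_ℓ (ε a, b) = κ_ℓ (a, ε b)`, and for `a tⁿ, b t¹⁻ⁿ` the two cocycle terms are
`n (n - 1) κ_ℓ (ε a, b)` and `n (1 - n) κ_ℓ (a, ε b)`. Both identities are biadditive, so checking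
them on monomials suffices; the statement about the central extension is the two combined.
-/

noncomputable section CotangentLoop

variable {L : Type} [LieRing L] [LieAlgebra ℂ L]

local notation "𝔡" => L × Module.Dual ℂ L

def killingEps : 𝔡 →ₗ[ℂ] 𝔡 :=
  LinearMap.inr ℂ L _ ∘ₗ killingForm ℂ L ∘ₗ LinearMap.fst ℂ L _

@[simp] lemma killingEps_apply (a : 𝔡) : killingEps a = (0, killingForm ℂ L a.1) := rfl

lemma coad_killingForm (x y : L) : coad L x (killingForm ℂ L y) = killingForm ℂ L ⁅x, y⁆ := by
  ext z
  rw [coad_apply]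
  exact (LieModule.traceForm_apply_lie_apply' ℂ L L x y z).symm

lemma lie_killingEps_left (a b : 𝔡) : ⁅killingEps a, b⁆ = killingEps ⁅a, b⁆ := by
  ext
  · simp
  · simp [coad_killingForm]
    rw [← lie_skew a.1 b.1, map_neg, LinearMap.neg_apply]

lemma lie_killingEps_right (a b : 𝔡) : ⁅a, killingEps b⁆ = killingEps ⁅a, b⁆ := by
  ext
  · simp
  · simp [coad_killingForm]

def kappaLForm (ℓ : ℂ) : LinearMap.BilinForm ℂ 𝔡 :=
  LinearMap.mk₂ ℂ (kappaL ℓ)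
    (fun _ _ _ => by simp [kappaL, kappa0]; ring)
    (fun _ _ _ => by simp [kappaL, kappa0]; ring)
    (fun _ _ _ => by simp [kappaL, kappa0]; ring)
    (fun _ _ _ => by simp [kappaL, kappa0]; ring)

lemma kappaLForm_apply (ℓ : ℂ) (a b : 𝔡) : kappaLForm ℓ a b = kappaL ℓ a b := rfl

lemma kappaLForm_killingEps_left (ℓ : ℂ) (a b : 𝔡) :
    kappaLForm ℓ (killingEps a) b = kappaLForm ℓ a (killingEps b) := by
  simp [kappaLForm_apply, kappaL, kappa0, LieModule.traceForm_comm ℂ L L a.1 b.1]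

open Finsupp

lemma depsLoop_eq_sum (u : LoopD L) :
    depsLoop u = u.sum fun n a => single (n - 1) ((n : ℂ) • killingEps a) :=
  rfl

lemma depsLoop_single (n : ℤ) (a : 𝔡) :
    depsLoop (single n a) = single (n - 1) ((n : ℂ) • killingEps a) :=
  sum_single_index (by simp)

lemma depsLoop_add (u v : LoopD L) : depsLoop (u + v) = depsLoop u + depsLoop v := by
  simp only [depsLoop_eq_sum]
  exact sum_add_index' (by simp) fun n a b => by rw [map_add, smul_add, single_add]

def depsLoopHom : LoopD L →+ LoopD L := AddMonoidHom.mk' depsLoop depsLoop_add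

lemma loopBr_add_left (u u' v : LoopD L) : loopBr (u + u') v = loopBr u v + loopBr u' v :=
  sum_add_index' (by simp [Finsupp.sum]) fun n a a' => by
    simp only [add_lie, single_add, Finsupp.sum_add]

lemma loopBr_add_right (u v v' : LoopD L) : loopBr u (v + v') = loopBr u v + loopBr u v' := by
  simp only [loopBr, ← Finsupp.sum_add]
  exact sum_congr fun n _ => sum_add_index' (by simp) fun m b b' => by rw [lie_add, single_add]

def loopBrHom : LoopD L →+ LoopD L →+ LoopD L :=
  AddMonoidHom.mk' (fun u => AddMonoidHom.mk' (loopBr u) (loopBr_add_right u))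
    fun u u' => AddMonoidHom.ext (loopBr_add_left u u')

lemma loopBr_single_single (n m : ℤ) (a b : 𝔡) :
    loopBr (single n a) (single m b) = single (n + m) ⁅a, b⁆ := by
  rw [loopBr, sum_single_index (by simp [Finsupp.sum]), sum_single_index (by simp)]

lemma omegaL_single_left (ℓ : ℂ) (n : ℤ) (a : 𝔡) (v : LoopD L) :
    omegaL ℓ (single n a) v = n * kappaLForm ℓ a (v (-n)) :=
  sum_single_index (by simp [← kappaLForm_apply])

lemma omegaL_add_left (ℓ : ℂ) (u u' v : LoopD L) :
    omegaL ℓ (u + u') v = omegaL ℓ u v + omegaL ℓ u' v :=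
  sum_add_index' (by simp [← kappaLForm_apply]) fun n a a' => by
    simp only [← kappaLForm_apply, map_add, LinearMap.add_apply, mul_add]

lemma omegaL_add_right (ℓ : ℂ) (u v v' : LoopD L) :
    omegaL ℓ u (v + v') = omegaL ℓ u v + omegaL ℓ u v' := by
  simp only [omegaL, ← Finsupp.sum_add]
  exact sum_congr fun n _ => by simp only [← kappaLForm_apply, Finsupp.add_apply, map_add, mul_add]

def omegaLHom (ℓ : ℂ) : LoopD L →+ LoopD L →+ ℂ :=
  AddMonoidHom.mk' (fun u => AddMonoidHom.mk' (omegaL ℓ u) (omegaL_add_right ℓ u))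
    fun u u' => AddMonoidHom.ext (omegaL_add_left ℓ u u')

lemma depsLoop_loopBr_single_single (n m : ℤ) (a b : 𝔡) :
    depsLoop (loopBr (single n a) (single m b)) =
      loopBr (depsLoop (single n a)) (single m b) + loopBr (single n a) (depsLoop (single m b)) := by
  simp only [loopBr_single_single, depsLoop_single, smul_lie, lie_smul, lie_killingEps_left,
    lie_killingEps_right, show n - 1 + m = n + m - 1 by ring, show n + (m - 1) = n + m - 1 by ring,
    ← single_add, ← add_smul, Int.cast_add]

lemma depsLoop_loopBr (u v : LoopD L) :
    depsLoop (loopBr u v) = loopBr (depsLoop u) v + loopBr u (depsLoop v) := by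
  suffices h : (loopBrHom (L := L)).compr₂ depsLoopHom =
      (loopBrHom (L := L)).comp depsLoopHom + loopBrHom.compl₂ depsLoopHom from
    DFunLike.congr_fun (DFunLike.congr_fun h u) v
  exact addHom_ext fun n a => addHom_ext fun m b => depsLoop_loopBr_single_single n m a b

lemma omegaL_depsLoop_single_single (ℓ : ℂ) (n m : ℤ) (a b : 𝔡) :
    omegaL ℓ (depsLoop (single n a)) (single m b) +
      omegaL ℓ (single n a) (depsLoop (single m b)) = 0 := by
  simp only [depsLoop_single, omegaL_single_left, single_apply]
  split_ifs with h₁ h₂ h₂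
  · subst h₁
    simp only [map_smul, LinearMap.smul_apply, smul_eq_mul, kappaLForm_killingEps_left]
    push_cast
    ring
  · omega
  · omega
  · simp

lemma omegaL_depsLoop (ℓ : ℂ) (u v : LoopD L) :
    omegaL ℓ (depsLoop u) v + omegaL ℓ u (depsLoop v) = 0 := by
  suffices h : (omegaLHom ℓ).comp depsLoopHom + (omegaLHom ℓ).compl₂ depsLoopHom = 0 from
    DFunLike.congr_fun (DFunLike.congr_fun h u) v
  exact addHom_ext fun n a => addHom_ext fun m b => omegaL_depsLoop_single_single ℓ n m a b

end CotangentLoop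

theorem deps_is_derivation_general (L : Type) [LieRing L] [LieAlgebra ℂ L]
    (ℓ : ℂ) :
    (∀ u v : LoopD L, depsLoop (loopBr u v) = loopBr (depsLoop u) v + loopBr u (depsLoop v)) ∧
    (∀ u v : LoopD L, omegaL ℓ (depsLoop u) v + omegaL ℓ u (depsLoop v) = 0) ∧
    (∀ A B : LoopD L × ℂ,
      extDeps (extBr ℓ A B) = extBr ℓ (extDeps A) B + extBr ℓ A (extDeps B)) := by
  refine ⟨depsLoop_loopBr, omegaL_depsLoop ℓ, fun A B => ?_⟩
  simp only [extDeps, extBr, Prod.mk_add_mk, depsLoop_loopBr, Prod.mk.injEq, true_and]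
  linear_combination -omegaL_depsLoop ℓ A.1 B.1

/-- `∂_ε` is a derivation of the loop algebra `𝔡[t,t⁻¹]`; moreover, for every
`ℓ ∈ ℂ` it is compatible with the cocycle `ω_ℓ`, so that it extends to a derivation of the
central extension `𝔡[t,t⁻¹] ⊕ ℂc_ℓ` acting by zero on `c_ℓ`. -/
theorem deps_is_derivation (L : Type) [LieRing L] [LieAlgebra ℂ L] [FiniteDimensional ℂ L]
    (ℓ : ℂ) :
    (∀ u v : LoopD L, depsLoop (loopBr u v) = loopBr (depsLoop u) v + loopBr u (depsLoop v)) ∧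
    (∀ u v : LoopD L, omegaL ℓ (depsLoop u) v + omegaL ℓ u (depsLoop v) = 0) ∧
    (∀ A B : LoopD L × ℂ,
      extDeps (extBr ℓ A B) = extBr ℓ (extDeps A) B + extBr ℓ A (extDeps B)) :=
  deps_is_derivation_general L ℓ
end

section
/- For all ℓ,s ∈ ℂ, the subspaces 𝔡̃_{ℓ,s,<0} = t⁻¹𝔡[t⁻¹] ⊕ ℂc and 𝔡̃_{ℓ,s,≥0} = ℂ∂ ⊕ 𝔡[t] are Lie subalgebras of 𝔡̃_{ℓ,s}, the vector space 𝔡̃_{ℓ,s} is their internal direct sum, and the bilinear form β_{ℓ−s} vanishes identically on each of them; i.e. they are complementary Lagrangian Lie subalgebras of (𝔡̃_{ℓ,s}, β_{ℓ−s}). -/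
open scoped TensorProduct

noncomputable section

variable (L : Type) [LieRing L] [LieAlgebra ℂ L]

attribute [local instance] LieRing.ofAssociativeRing

variable {L}

variable (L)

end

noncomputable section TdModel

variable {L : Type} [LieRing L] [LieAlgebra ℂ L]

/-- The affine Kac–Moody algebra `𝔡̃_{ℓ,s} = ℂ∂ ⊕ 𝔡[t,t⁻¹] ⊕ ℂc` (first coordinate:
coefficient of `∂`, last coordinate: coefficient of `c`). -/
abbrev TdD (L : Type) [LieRing L] [LieAlgebra ℂ L] := ℂ × LoopD L × ℂ

/-- The Lie bracket of `𝔡̃_{ℓ,s}`: `c` is central, `[∂,u] = ∂_s(u)` and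
`[u,v] = [u,v]_loop + ω_ℓ(u,v)·c` for `u, v ∈ 𝔡[t,t⁻¹]`. -/
def tdBr (ℓ s : ℂ) (A B : TdD L) : TdD L :=
  (0, A.1 • dsLoop s B.2.1 - B.1 • dsLoop s A.2.1 + loopBr A.2.1 B.2.1,
    omegaL ℓ A.2.1 B.2.1)

/-- The bilinear form `β_r` on `𝔡̃` determined by `β_r(a⊗tⁿ, b⊗tᵐ) = δ_{n+m,−1}·κ_r(a,b)`,
`β_r(c,∂) = β_r(∂,c) = 1`, `β_r(∂,∂) = β_r(c,c) = 0` and `β_r(𝔡[t,t⁻¹], ℂ∂⊕ℂc) = 0`. -/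
def betaForm (r : ℂ) (A B : TdD L) : ℂ :=
  A.1 * B.2.2 + A.2.2 * B.1 + A.2.1.sum fun n a => kappaL r a (B.2.1 (-n - 1))

end TdModel

/-- `𝔡̃_{ℓ,s,<0} = t⁻¹𝔡[t⁻¹] ⊕ ℂc` as a subset of `𝔡̃_{ℓ,s}`. -/
def tdNeg (L : Type) [LieRing L] [LieAlgebra ℂ L] : Set (TdD L) :=
  {A | A.1 = 0 ∧ ∀ n : ℤ, 0 ≤ n → A.2.1 n = 0}

/-- `𝔡̃_{ℓ,s,≥0} = ℂ∂ ⊕ 𝔡[t]` as a subset of `𝔡̃_{ℓ,s}`. -/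
def tdPos (L : Type) [LieRing L] [LieAlgebra ℂ L] : Set (TdD L) :=
  {A | A.2.2 = 0 ∧ ∀ n : ℤ, n < 0 → A.2.1 n = 0}

/-! Every piece of `𝔡̃_{ℓ,s}` is graded by the power of `t`, with `c` central and `∂` lowering
degrees by one. The loop bracket adds degrees, so it preserves `t⁻¹𝔡[t⁻¹]` and `𝔡[t]`; the
derivation `∂_s` preserves `𝔡[t]` because its factor `n` kills the constant term; and the
cocycle `ω_ℓ`, pairing degree `n` with degree `-n` through the factor `n`, vanishes on `𝔡[t]`.
The form `β` pairs degree `n` with degree `-n-1`, of opposite sign, and `∂` only with `c`,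
which lie in different halves; so both halves are isotropic. -/

section Grading

variable {L : Type} [LieRing L] [LieAlgebra ℂ L]

lemma loopBr_apply (u v : LoopD L) (k : ℤ) :
    loopBr u v k = ∑ n ∈ u.support, ⁅u n, v (k - n)⁆ := by
  rw [loopBr, Finsupp.sum_apply]
  refine Finset.sum_congr rfl fun n _ => ?_
  dsimp only
  rw [Finsupp.sum_apply, Finsupp.sum_eq_single (k - n)]
  · simp
  · intro m _ hm
    rw [Finsupp.single_apply, if_neg (by omega)]
  · simp

lemma dtLoop_apply (u : LoopD L) (k : ℤ) :
    dtLoop u k = ((k + 1 : ℤ) : ℂ) • u (k + 1) := by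
  rw [dtLoop, Finsupp.sum_apply, Finsupp.sum_eq_single (k + 1)]
  · simp
  · intro n _ hn
    rw [Finsupp.single_apply, if_neg (by omega)]
  · simp

lemma depsLoop_apply (u : LoopD L) (k : ℤ) :
    depsLoop u k = ((k + 1 : ℤ) : ℂ) • ((0 : L), killingForm ℂ L (u (k + 1)).1) := by
  rw [depsLoop, Finsupp.sum_apply, Finsupp.sum_eq_single (k + 1)]
  · simp
  · intro n _ hn
    rw [Finsupp.single_apply, if_neg (by omega)]
  · simp

lemma loopBr_apply_eq_zero_of_nonneg {u v : LoopD L} (hu : ∀ n, 0 ≤ n → u n = 0)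
    (hv : ∀ n, 0 ≤ n → v n = 0) {k : ℤ} (hk : 0 ≤ k) : loopBr u v k = 0 := by
  rw [loopBr_apply]
  refine Finset.sum_eq_zero fun n hn => ?_
  have hn : n < 0 := not_le.mp fun h => Finsupp.mem_support_iff.mp hn (hu n h)
  rw [hv (k - n) (by omega), lie_zero]

lemma loopBr_apply_eq_zero_of_neg {u v : LoopD L} (hu : ∀ n, n < 0 → u n = 0)
    (hv : ∀ n, n < 0 → v n = 0) {k : ℤ} (hk : k < 0) : loopBr u v k = 0 := by
  rw [loopBr_apply]
  refine Finset.sum_eq_zero fun n hn => ?_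
  have hn : 0 ≤ n := not_lt.mp fun h => Finsupp.mem_support_iff.mp hn (hu n h)
  rw [hv (k - n) (by omega), lie_zero]

lemma dsLoop_apply_eq_zero_of_neg (s : ℂ) {u : LoopD L} (hu : ∀ n, n < 0 → u n = 0) {k : ℤ}
    (hk : k < 0) : dsLoop s u k = 0 := by
  obtain hk' | hk' := lt_or_eq_of_le (show k + 1 ≤ 0 by omega)
  · simp [dsLoop, dtLoop_apply, depsLoop_apply, hu _ hk']
  · simp [dsLoop, dtLoop_apply, depsLoop_apply, hk']

lemma omegaL_eq_zero_of_nonneg (ℓ : ℂ) {u v : LoopD L} (hu : ∀ n, n < 0 → u n = 0)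
    (hv : ∀ n, n < 0 → v n = 0) : omegaL ℓ u v = 0 := by
  refine Finset.sum_eq_zero fun n hn => ?_
  have hn : 0 ≤ n := not_lt.mp fun h => Finsupp.mem_support_iff.mp hn (hu n h)
  obtain rfl | hn' := eq_or_lt_of_le hn
  · simp
  · simp [hv (-n) (by omega), kappaL, kappa0]

end Grading

section Splitting

variable {L : Type} [LieRing L] [LieAlgebra ℂ L]

lemma tdBr_mem_tdNeg (ℓ s : ℂ) {A B : TdD L} (hA : A ∈ tdNeg L) (hB : B ∈ tdNeg L) :
    tdBr ℓ s A B ∈ tdNeg L := by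
  refine ⟨rfl, fun n hn => ?_⟩
  simp [tdBr, hA.1, hB.1, loopBr_apply_eq_zero_of_nonneg hA.2 hB.2 hn]

lemma tdBr_mem_tdPos (ℓ s : ℂ) {A B : TdD L} (hA : A ∈ tdPos L) (hB : B ∈ tdPos L) :
    tdBr ℓ s A B ∈ tdPos L := by
  refine ⟨omegaL_eq_zero_of_nonneg ℓ hA.2 hB.2, fun n hn => ?_⟩
  simp [tdBr, dsLoop_apply_eq_zero_of_neg s hA.2 hn, dsLoop_apply_eq_zero_of_neg s hB.2 hn,
    loopBr_apply_eq_zero_of_neg hA.2 hB.2 hn]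

lemma kappaL_zero_right (ℓ : ℂ) (a : L × Module.Dual ℂ L) : kappaL ℓ a 0 = 0 := by
  simp [kappaL, kappa0]

lemma betaForm_eq_zero_of_mem_tdNeg (r : ℂ) {A B : TdD L} (hA : A ∈ tdNeg L)
    (hB : B ∈ tdNeg L) : betaForm r A B = 0 := by
  rw [betaForm, hA.1, hB.1, zero_mul, mul_zero, zero_add, zero_add]
  refine Finset.sum_eq_zero fun n hn => ?_
  have hn : n < 0 := not_le.mp fun h => Finsupp.mem_support_iff.mp hn (hA.2 n h)
  dsimp only
  rw [hB.2 (-n - 1) (by omega), kappaL_zero_right]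

lemma betaForm_eq_zero_of_mem_tdPos (r : ℂ) {A B : TdD L} (hA : A ∈ tdPos L)
    (hB : B ∈ tdPos L) : betaForm r A B = 0 := by
  rw [betaForm, hA.1, hB.1, zero_mul, mul_zero, zero_add, zero_add]
  refine Finset.sum_eq_zero fun n hn => ?_
  have hn : 0 ≤ n := not_lt.mp fun h => Finsupp.mem_support_iff.mp hn (hA.2 n h)
  dsimp only
  rw [hB.2 (-n - 1) (by omega), kappaL_zero_right]

def tdNegPart (A : TdD L) : TdD L := (0, A.2.1.filter (· < 0), A.2.2)

def tdPosPart (A : TdD L) : TdD L := (A.1, A.2.1.filter (¬ · < 0), 0)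

lemma tdNegPart_mem (A : TdD L) : tdNegPart A ∈ tdNeg L :=
  ⟨rfl, fun _ hn => Finsupp.filter_apply_neg _ _ (not_lt.mpr hn)⟩

lemma tdPosPart_mem (A : TdD L) : tdPosPart A ∈ tdPos L :=
  ⟨rfl, fun _ hn => Finsupp.filter_apply_neg _ _ (not_not.mpr hn)⟩

lemma tdNegPart_add_tdPosPart (A : TdD L) : tdNegPart A + tdPosPart A = A := by
  simp only [tdNegPart, tdPosPart, Prod.mk_add_mk, zero_add, add_zero,
    Finsupp.filter_add_filter_not]

lemma eq_tdNegPart_of_add_eq {A p q : TdD L} (hp : p ∈ tdNeg L) (hq : q ∈ tdPos L)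
    (hA : p + q = A) : p = tdNegPart A := by
  refine Prod.ext hp.1 (Prod.ext (Finsupp.ext fun n => ?_) ?_)
  · change p.2.1 n = A.2.1.filter (· < 0) n
    by_cases hn : n < 0
    · rw [Finsupp.filter_apply_pos (p := (· < 0)) _ hn, ← hA]
      simp [hq.2 n hn]
    · rw [Finsupp.filter_apply_neg (p := (· < 0)) _ hn, hp.2 n (not_lt.mp hn)]
  · simp [tdNegPart, ← hA, hq.1]

lemma existsUnique_tdNeg_add_tdPos (A : TdD L) :
    ∃! pq : tdNeg L × tdPos L, A = pq.1.1 + pq.2.1 := by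
  refine ⟨(⟨_, tdNegPart_mem A⟩, ⟨_, tdPosPart_mem A⟩), (tdNegPart_add_tdPosPart A).symm, ?_⟩
  rintro ⟨⟨p, hp⟩, ⟨q, hq⟩⟩ hA
  have hpA : p = tdNegPart A := eq_tdNegPart_of_add_eq hp hq hA.symm
  have hqA : q = tdPosPart A := by
    rw [← add_right_inj p, ← hA, hpA, tdNegPart_add_tdPosPart]
  simp only [hpA, hqA]

end Splitting

theorem lagrangian_splitting_general (L : Type) [LieRing L] [LieAlgebra ℂ L] (ℓ s : ℂ) :
    (∀ A B : TdD L, A ∈ tdNeg L → B ∈ tdNeg L → tdBr ℓ s A B ∈ tdNeg L) ∧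
    (∀ A B : TdD L, A ∈ tdPos L → B ∈ tdPos L → tdBr ℓ s A B ∈ tdPos L) ∧
    (∀ A : TdD L, ∃! pq : tdNeg L × tdPos L, A = pq.1.1 + pq.2.1) ∧
    (∀ A B : TdD L, A ∈ tdNeg L → B ∈ tdNeg L → betaForm (ℓ - s) A B = 0) ∧
    (∀ A B : TdD L, A ∈ tdPos L → B ∈ tdPos L → betaForm (ℓ - s) A B = 0) :=
  ⟨fun _ _ => tdBr_mem_tdNeg ℓ s, fun _ _ => tdBr_mem_tdPos ℓ s, existsUnique_tdNeg_add_tdPos,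
    fun _ _ => betaForm_eq_zero_of_mem_tdNeg (ℓ - s),
    fun _ _ => betaForm_eq_zero_of_mem_tdPos (ℓ - s)⟩

/-- For all `ℓ, s ∈ ℂ`, the subspaces `𝔡̃_{ℓ,s,<0} = t⁻¹𝔡[t⁻¹] ⊕ ℂc` and
`𝔡̃_{ℓ,s,≥0} = ℂ∂ ⊕ 𝔡[t]` are complementary Lagrangian Lie subalgebras of
`(𝔡̃_{ℓ,s}, β_{ℓ−s})`. -/
theorem lagrangian_splitting (L : Type) [LieRing L] [LieAlgebra ℂ L]
    [FiniteDimensional ℂ L] (ℓ s : ℂ) :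
    (∀ A B : TdD L, A ∈ tdNeg L → B ∈ tdNeg L → tdBr ℓ s A B ∈ tdNeg L) ∧
    (∀ A B : TdD L, A ∈ tdPos L → B ∈ tdPos L → tdBr ℓ s A B ∈ tdPos L) ∧
    (∀ A : TdD L, ∃! pq : tdNeg L × tdPos L, A = pq.1.1 + pq.2.1) ∧
    (∀ A B : TdD L, A ∈ tdNeg L → B ∈ tdNeg L → betaForm (ℓ - s) A B = 0) ∧
    (∀ A B : TdD L, A ∈ tdPos L → B ∈ tdPos L → betaForm (ℓ - s) A B = 0) :=
  lagrangian_splitting_general L ℓ s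
end

section
/- Let H be a bialgebra over a commutative ring k. If R ∈ H ⊗ H satisfies the intertwining relation R·Δ(x) = Δ^op(x)·R for all x ∈ H together with the cocycle relation (Δ ⊗ id)(R) = R¹³ · R²³, then R satisfies the quantum Yang–Baxter equation R¹² R¹³ R²³ = R²³ R¹³ R¹² in H ⊗ H ⊗ H. -/
open scoped TensorProduct

noncomputable section

variable (k H : Type) [CommRing k] [Ring H] [Bialgebra k H]

/-- The embedding `H ⊗ H → H ⊗ H ⊗ H` into the (1,2) tensor factors. -/
def emb12 : H ⊗[k] H →ₗ[k] H ⊗[k] (H ⊗[k] H) :=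
  LinearMap.lTensor H ((TensorProduct.mk k H H).flip 1)

/-- The embedding `H ⊗ H → H ⊗ H ⊗ H` into the (1,3) tensor factors. -/
def emb13 : H ⊗[k] H →ₗ[k] H ⊗[k] (H ⊗[k] H) :=
  LinearMap.lTensor H (TensorProduct.mk k H H 1)

/-- The embedding `H ⊗ H → H ⊗ H ⊗ H` into the (2,3) tensor factors. -/
def emb23 : H ⊗[k] H →ₗ[k] H ⊗[k] (H ⊗[k] H) :=
  TensorProduct.mk k H (H ⊗[k] H) 1

/-- The map `Δ ⊗ id : H ⊗ H → H ⊗ H ⊗ H`. -/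
def comulTensorId : H ⊗[k] H →ₗ[k] H ⊗[k] (H ⊗[k] H) :=
  (TensorProduct.assoc k H H H).toLinearMap ∘ₗ
    LinearMap.rTensor H (Coalgebra.comul (R := k) (A := H))

/-- The opposite comultiplication `Δ^op = τ ∘ Δ`. -/
def comulOp : H →ₗ[k] H ⊗[k] H :=
  (TensorProduct.comm k H H).toLinearMap ∘ₗ Coalgebra.comul (R := k) (A := H)

/-!
Multiplying the cocycle relation `(Δ ⊗ id)(R) = R¹³ R²³` on the left by `R¹²` and using the
intertwining relation in the first two tensor factors gives
`R¹² R¹³ R²³ = (Δ^op ⊗ id)(R) · R¹²`. Now `(Δ^op ⊗ id)(R)` is the image of `(Δ ⊗ id)(R)` under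
the algebra automorphism of `H ⊗ H ⊗ H` swapping the first two factors, which exchanges `R¹³` and
`R²³`; so by the cocycle relation again it equals `R²³ R¹³`.
-/

theorem tmul_one_mul_rTensor_eq_rTensor_mul_tmul_one {R M A B : Type*} [CommSemiring R]
    [AddCommMonoid M] [Module R M] [Semiring A] [Algebra R A] [Semiring B] [Algebra R B]
    {f g : M →ₗ[R] A} {a : A} (h : ∀ x, a * f x = g x * a) (t : M ⊗[R] B) :
    (a ⊗ₜ[R] (1 : B)) * LinearMap.rTensor B f t = LinearMap.rTensor B g t * (a ⊗ₜ[R] (1 : B)) := by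
  induction t using TensorProduct.induction_on with
  | zero => simp
  | tmul x b => simp [Algebra.TensorProduct.tmul_mul_tmul, h]
  | add s t hs ht => simp only [map_add, mul_add, add_mul, hs, ht]

theorem TensorProduct.leftComm_assoc {R A B C : Type*} [CommSemiring R] [AddCommMonoid A]
    [Module R A] [AddCommMonoid B] [Module R B] [AddCommMonoid C] [Module R C]
    (v : (A ⊗[R] B) ⊗[R] C) :
    TensorProduct.leftComm R A B C (TensorProduct.assoc R A B C v) =
      TensorProduct.assoc R B A C (LinearMap.rTensor C (TensorProduct.comm R A B) v) := by
  simp only [TensorProduct.leftComm_def, LinearEquiv.trans_apply, LinearEquiv.symm_apply_apply]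
  rfl

section

variable {k H}

theorem emb12_eq_assoc_tmul_one (r : H ⊗[k] H) :
    emb12 k H r = Algebra.TensorProduct.assoc k k k H H H (r ⊗ₜ 1) := by
  induction r using TensorProduct.induction_on with
  | zero => simp
  | tmul a b => rfl
  | add r s hr hs => simp only [map_add, TensorProduct.add_tmul, hr, hs]

theorem comulTensorId_eq_assoc_rTensor (t : H ⊗[k] H) :
    comulTensorId k H t =
      Algebra.TensorProduct.assoc k k k H H H (LinearMap.rTensor H (Coalgebra.comul (R := k)) t) :=
  rfl

theorem leftComm_emb13 (t : H ⊗[k] H) :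
    Algebra.TensorProduct.leftComm k H H H (emb13 k H t) = emb23 k H t := by
  induction t using TensorProduct.induction_on with
  | zero => simp
  | tmul a b => rfl
  | add s t hs ht => simp only [map_add, hs, ht]

theorem leftComm_emb23 (t : H ⊗[k] H) :
    Algebra.TensorProduct.leftComm k H H H (emb23 k H t) = emb13 k H t := by
  induction t using TensorProduct.induction_on with
  | zero => simp
  | tmul a b => rfl
  | add s t hs ht => simp only [map_add, hs, ht]

theorem leftComm_comulTensorId (t : H ⊗[k] H) :
    Algebra.TensorProduct.leftComm k H H H (comulTensorId k H t) =
      Algebra.TensorProduct.assoc k k k H H H (LinearMap.rTensor H (comulOp k H) t) := by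
  rw [comulOp, LinearMap.rTensor_comp, LinearMap.comp_apply]
  exact TensorProduct.leftComm_assoc _

theorem emb12_mul_comulTensorId {R : H ⊗[k] H}
    (hint : ∀ x : H, R * Coalgebra.comul (R := k) x = comulOp k H x * R) (t : H ⊗[k] H) :
    emb12 k H R * comulTensorId k H t =
      Algebra.TensorProduct.leftComm k H H H (comulTensorId k H t) * emb12 k H R := by
  rw [emb12_eq_assoc_tmul_one, comulTensorId_eq_assoc_rTensor, ← map_mul,
    tmul_one_mul_rTensor_eq_rTensor_mul_tmul_one hint, map_mul, ← comulTensorId_eq_assoc_rTensor,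
    leftComm_comulTensorId]

end

/-- In a bialgebra `H` over a commutative ring `k`, if `R ∈ H ⊗ H`
intertwines `Δ` and `Δ^op`, i.e. `R·Δ(x) = Δ^op(x)·R` for all `x ∈ H`, and satisfies the
cocycle relation `(Δ ⊗ id)(R) = R¹³ · R²³`, then `R` satisfies the quantum Yang–Baxter
equation `R¹² R¹³ R²³ = R²³ R¹³ R¹²` in `H ⊗ H ⊗ H`. -/
theorem quantum_yang_baxter_of_intertwining_and_cocycle (R : H ⊗[k] H)
    (hint : ∀ x : H, R * Coalgebra.comul (R := k) x = comulOp k H x * R)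
    (hcoc : comulTensorId k H R = emb13 k H R * emb23 k H R) :
    emb12 k H R * emb13 k H R * emb23 k H R = emb23 k H R * emb13 k H R * emb12 k H R := by
  calc emb12 k H R * emb13 k H R * emb23 k H R
      = emb12 k H R * comulTensorId k H R := by rw [mul_assoc, hcoc]
    _ = Algebra.TensorProduct.leftComm k H H H (comulTensorId k H R) * emb12 k H R :=
      emb12_mul_comulTensorId hint R
    _ = emb23 k H R * emb13 k H R * emb12 k H R := by
      rw [hcoc, map_mul, leftComm_emb13, leftComm_emb23]
end
end

section
/- The R-module K is free with basis { t^k · Π^{−n} : 0 ≤ k < |I|, n ≥ 1 }, where Π = Π_{i∈I}(t−t_i). -/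
set_option synthInstance.maxHeartbeats 1000000
set_option maxHeartbeats 1000000

noncomputable section

open Polynomial

variable (I : Type) [Fintype I] [DecidableEq I]

/-- `R = ℂ[(t_i)_{i ∈ I}]`. -/
abbrev Rbase := MvPolynomial I ℂ

/-- `R[t]`. -/
abbrev Rt (I : Type) := Polynomial (Rbase I)

/-- `Π = Π_{i∈I} (t − t_i) ∈ R[t]`. -/
def Pprod : Rt I := ∏ i : I, (X - C (MvPolynomial.X i))

/-- `S = R[t][Π⁻¹]`, the localization of `R[t]` at `Π`. -/
abbrev Sloc := Localization.Away (Pprod I)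

/-- The `R`-submodule `K ⊆ S` spanned by the elements `tⁿ·Π_{i∈I}(t−t_i)^{−k_i}` over all
tuples `(k_i) ∈ ℕ^I` and all `n` with `0 ≤ n < Σ_i k_i`. -/
def Ksub : Submodule (Rbase I) (Sloc I) :=
  Submodule.span (Rbase I)
    {s | ∃ (k : I → ℕ) (n : ℕ), n < ∑ i : I, k i ∧
      s = algebraMap (Rt I) (Sloc I) (X ^ n) *
        ∏ i : I, (Ring.inverse (algebraMap (Rt I) (Sloc I) (X - C (MvPolynomial.X i)))) ^ k i}

/-- The proposed basis `{ t^k · Π^{−n} : 0 ≤ k < |I|, n ≥ 1 }` of `K`. -/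
def Kbasis (p : Fin (Fintype.card I) × ℕ) : Sloc I :=
  algebraMap (Rt I) (Sloc I) (X ^ (p.1 : ℕ)) *
    (Ring.inverse (algebraMap (Rt I) (Sloc I) (Pprod I))) ^ (p.2 + 1)

/-!
Write `d = |I|`. Multiplying by a large power `Π^N` turns a linear relation among the
`t^k Π^{-(n+1)}` into one among the polynomials `t^k Π^{N-n-1}`; these are monic of the pairwise
distinct degrees `k + d (N-n-1)`, so the relation is trivial. For the span, put `M = Σ k_i`: a
generator `tⁿ ∏ (t-t_i)^{-k_i}` of `K` equals `f Π^{-M}` with `f = tⁿ ∏ (t-t_i)^{M-k_i}` of degree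
`< d M`, and repeated division by `Π` (the `Π`-adic expansion of `f`) writes `f Π^{-M}` as a
combination of the `t^k Π^{-m}` with `k < d`, `1 ≤ m ≤ M`. Each such element is itself a generator.
-/

theorem Ring.inverse_pow_mul_pow_of_le {M₀ : Type*} [MonoidWithZero M₀] {a : M₀}
    (ha : IsUnit a) {k n : ℕ} (h : k ≤ n) : Ring.inverse a ^ k * a ^ n = a ^ (n - k) :=
  (Ring.inverse_pow_mul_eq_iff_eq_mul _ _ ha).mpr (by rw [← pow_add, Nat.add_sub_cancel' h])

theorem Ring.prod_inverse_pow_eq {ι M₀ : Type*} [Fintype ι] [CommMonoidWithZero M₀] {a : ι → M₀}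
    (ha : IsUnit (∏ i, a i)) {k : ι → ℕ} {n : ℕ} (hk : ∀ i, k i ≤ n) :
    ∏ i, Ring.inverse (a i) ^ k i = (∏ i, a i ^ (n - k i)) * Ring.inverse (∏ i, a i) ^ n := by
  rw [mul_comm, eq_comm, Ring.inverse_pow_mul_eq_iff_eq_mul _ _ ha, ← Finset.prod_pow,
    ← Finset.prod_mul_distrib]
  refine Finset.prod_congr rfl fun i _ => ?_
  have hai : IsUnit (a i) :=
    isUnit_of_dvd_unit (Finset.dvd_prod_of_mem a (Finset.mem_univ i)) ha
  rw [mul_comm, Ring.inverse_pow_mul_pow_of_le hai (hk i)]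

namespace Polynomial

variable {A : Type*} [CommRing A]

theorem linearIndepOn_of_monic_of_injOn_natDegree [Nontrivial A] {ι : Type*} {v : ι → A[X]}
    {s : Set ι} (hm : ∀ i ∈ s, (v i).Monic) (hinj : s.InjOn (natDegree ∘ v)) :
    LinearIndepOn A v s := by
  classical
  refine linearIndepOn_iff_linearIndepOn_finset.mpr fun t hts => ?_
  refine linearIndepOn_finset_iff.mpr fun g hg => ?_
  by_contra! hne
  obtain ⟨i₀, hi₀, hmax⟩ := (t.filter (g · ≠ 0)).exists_max_image (natDegree ∘ v)
    (by simpa [Finset.filter_nonempty_iff] using hne)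
  rw [Finset.mem_filter] at hi₀
  -- The coefficient of the sum in the top degree `natDegree (v i₀)` is `g i₀`.
  have hcoeff := congrArg (coeff · (v i₀).natDegree) hg
  simp only [finsetSum_coeff, coeff_smul, smul_eq_mul, coeff_zero] at hcoeff
  rw [Finset.sum_eq_single_of_mem i₀ hi₀.1, (hm i₀ (hts hi₀.1)).coeff_natDegree, mul_one]
    at hcoeff
  · exact hi₀.2 hcoeff
  intro j hj hji
  by_cases hgj : g j = 0
  · rw [hgj, zero_mul]
  refine mul_eq_zero_of_right _ (coeff_eq_zero_of_natDegree_lt ?_)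
  exact (hmax j (Finset.mem_filter.mpr ⟨hj, hgj⟩)).lt_of_ne
    fun h => hji (hinj (hts hj) (hts hi₀.1) h)

end Polynomial

section AwayBasis

variable {A : Type*} [CommRing A] {P : A[X]}

def awayBasis (P : A[X]) (d : ℕ) (q : Fin d × ℕ) : Localization.Away P :=
  algebraMap A[X] _ (X ^ (q.1 : ℕ)) * Ring.inverse (algebraMap A[X] _ P) ^ (q.2 + 1)

theorem algebraMap_away_injective (hP : P.Monic) :
    Function.Injective (algebraMap A[X] (Localization.Away P)) :=
  IsLocalization.injective _ (Submonoid.powers_le.mpr hP.mem_nonZeroDivisors)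

theorem awayBasis_mul_pow {d N : ℕ} {q : Fin d × ℕ} (hq : q.2 < N) :
    awayBasis P d q * algebraMap A[X] _ P ^ N =
      algebraMap A[X] _ (X ^ (q.1 : ℕ) * P ^ (N - (q.2 + 1))) := by
  rw [awayBasis, mul_assoc,
    Ring.inverse_pow_mul_pow_of_le (IsLocalization.Away.algebraMap_isUnit P) hq, map_mul,
    map_pow, map_pow]

theorem linearIndependent_awayBasis [Nontrivial A] (hP : P.Monic) {d : ℕ}
    (hd : P.natDegree = d) : LinearIndependent A (awayBasis P d) := by
  classical
  refine linearIndependent_iff'.mpr fun s g hg q hq => ?_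
  obtain ⟨N, hN⟩ : ∃ N, ∀ q ∈ s, q.2 < N :=
    ⟨s.sup (·.2) + 1, fun q hq => Nat.lt_succ_of_le (Finset.le_sup (f := (·.2)) hq)⟩
  set v : Fin d × ℕ → A[X] := fun q => X ^ (q.1 : ℕ) * P ^ (N - (q.2 + 1))
  have hv : ∑ q ∈ s, g q • v q = 0 := by
    apply algebraMap_away_injective hP
    rw [map_zero, map_sum, ← zero_mul (algebraMap A[X] _ P ^ N), ← hg, Finset.sum_mul]
    refine Finset.sum_congr rfl fun q hq => ?_
    rw [smul_mul_assoc, awayBasis_mul_pow (hN q hq), algebraMap.smul]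
  have hmonic : ∀ q ∈ (s : Set (Fin d × ℕ)), (v q).Monic :=
    fun q _ => (monic_X_pow _).mul (hP.pow _)
  have hdeg (q : Fin d × ℕ) : (v q).natDegree = q.1 + d * (N - (q.2 + 1)) := by
    rw [(monic_X_pow _).natDegree_mul (hP.pow _), natDegree_X_pow, hP.natDegree_pow, hd, mul_comm]
  -- The degree `k + d * j` with `k < d` determines `k` and `j`.
  have hinj : (s : Set (Fin d × ℕ)).InjOn (natDegree ∘ v) := by
    intro q hq r hr hqr
    simp only [Function.comp_apply, hdeg] at hqr
    have hd0 : 0 < d := q.1.pos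
    obtain ⟨hdiv, hmod⟩ := (Nat.div_mod_unique hd0).mpr ⟨rfl, q.1.isLt⟩
    obtain ⟨hdiv', hmod'⟩ := (Nat.div_mod_unique hd0).mpr ⟨hqr.symm, r.1.isLt⟩
    have := hN q hq
    have := hN r hr
    exact Prod.ext (Fin.ext (hmod.symm.trans hmod')) (by omega)
  exact linearIndepOn_finset_iff.mp (linearIndepOn_of_monic_of_injOn_natDegree hmonic hinj)
    g hv q hq

theorem algebraMap_mul_inverse_pow_mem_span_awayBasis_of_natDegree_lt {d : ℕ} {f : A[X]}
    (hf : f.natDegree < d) (m : ℕ) :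
    algebraMap A[X] _ f * Ring.inverse (algebraMap A[X] (Localization.Away P) P) ^ (m + 1) ∈
      Submodule.span A (Set.range (awayBasis P d)) := by
  rw [as_sum_range' f d hf, ← Fin.sum_univ_eq_sum_range, map_sum, Finset.sum_mul]
  refine Submodule.sum_mem _ fun k _ => ?_
  rw [← smul_X_eq_monomial, algebraMap.smul, smul_mul_assoc]
  exact Submodule.smul_mem _ _ (Submodule.subset_span ⟨(k, m), rfl⟩)

theorem algebraMap_mul_inverse_pow_mem_span_awayBasis (hP : P.Monic) {d : ℕ}
    (hd : P.natDegree = d) (m : ℕ) {f : A[X]} (hf : f.natDegree < d * (m + 1)) :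
    algebraMap A[X] _ f * Ring.inverse (algebraMap A[X] (Localization.Away P) P) ^ (m + 1) ∈
      Submodule.span A (Set.range (awayBasis P d)) := by
  induction m generalizing f with
  | zero =>
    exact algebraMap_mul_inverse_pow_mem_span_awayBasis_of_natDegree_lt (by simpa using hf) 0
  | succ m ih =>
    set φ := algebraMap A[X] (Localization.Away P)
    have hd0 : 0 < d := Nat.pos_of_ne_zero fun h => by simp [h] at hf
    have hPu : φ P * Ring.inverse (φ P) = 1 :=
      Ring.mul_inverse_cancel _ (IsLocalization.Away.algebraMap_isUnit P)
    -- Divide `f` by `P`: the factor `P` of `P * (f /ₘ P)` cancels one power of `P⁻¹`.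
    have hsplit : φ f * Ring.inverse (φ P) ^ (m + 1 + 1) =
        φ (f %ₘ P) * Ring.inverse (φ P) ^ (m + 1 + 1) +
          φ (f /ₘ P) * Ring.inverse (φ P) ^ (m + 1) := by
      conv_lhs => rw [← modByMonic_add_div f P]
      rw [map_add, map_mul]
      linear_combination (φ (f /ₘ P) * Ring.inverse (φ P) ^ (m + 1)) * hPu
    rw [hsplit]
    refine add_mem (algebraMap_mul_inverse_pow_mem_span_awayBasis_of_natDegree_lt ?_ _) (ih ?_)
    · exact hd ▸ natDegree_modByMonic_lt f hP fun h => by simp [h] at hd; omega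
    · rw [natDegree_divByMonic f hP, hd]
      have : d * (m + 1 + 1) = d * (m + 1) + d := by ring
      have : d ≤ d * (m + 1) := Nat.le_mul_of_pos_right d m.succ_pos
      omega

end AwayBasis

section

variable {I}

omit [DecidableEq I]

theorem monic_Pprod : (Pprod I).Monic :=
  monic_prod_of_monic _ _ fun _ _ => monic_X_sub_C _

theorem natDegree_Pprod : (Pprod I).natDegree = Fintype.card I := by
  rw [Pprod, natDegree_prod_of_monic _ _ fun _ _ => monic_X_sub_C _]
  simp

theorem algebraMap_Pprod :
    algebraMap (Rt I) (Sloc I) (Pprod I) =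
      ∏ i, algebraMap (Rt I) (Sloc I) (X - C (MvPolynomial.X i)) :=
  map_prod _ _ _

theorem isUnit_prod_algebraMap_X_sub_C :
    IsUnit (∏ i, algebraMap (Rt I) (Sloc I) (X - C (MvPolynomial.X i))) :=
  algebraMap_Pprod (I := I) ▸ IsLocalization.Away.algebraMap_isUnit _

theorem Kbasis_eq_awayBasis : Kbasis I = awayBasis (Pprod I) (Fintype.card I) := rfl

theorem Kbasis_mem_Ksub (q : Fin (Fintype.card I) × ℕ) : Kbasis I q ∈ Ksub I := by
  refine Submodule.subset_span ⟨fun _ => q.2 + 1, q.1, ?_, ?_⟩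
  · simp only [Finset.sum_const, Finset.card_univ, smul_eq_mul]
    exact q.1.isLt.trans_le (Nat.le_mul_of_pos_right _ q.2.succ_pos)
  · rw [Ring.prod_inverse_pow_eq isUnit_prod_algebraMap_X_sub_C fun _ => le_rfl, Kbasis,
      algebraMap_Pprod]
    simp

theorem Ksub_le_span_Kbasis : Ksub I ≤ Submodule.span (Rbase I) (Set.range (Kbasis I)) := by
  refine Submodule.span_le.mpr ?_
  rintro _ ⟨k, n, hn, rfl⟩
  obtain ⟨m, hm⟩ : ∃ m, ∑ i, k i = m + 1 := Nat.exists_eq_add_one.mpr (by omega)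
  have hk (i : I) : k i ≤ m + 1 :=
    hm ▸ Finset.single_le_sum (fun _ _ => Nat.zero_le _) (Finset.mem_univ i)
  have hdeg : (X ^ n * ∏ i, (X - C (MvPolynomial.X i)) ^ (m + 1 - k i) : Rt I).natDegree <
      Fintype.card I * (m + 1) := by
    have hmonic (i : I) : ((X - C (MvPolynomial.X i)) ^ (m + 1 - k i) : Rt I).Monic :=
      (monic_X_sub_C _).pow _
    rw [(monic_X_pow n).natDegree_mul (monic_prod_of_monic _ _ fun i _ => hmonic i),
      natDegree_X_pow, natDegree_prod_of_monic _ _ fun i _ => hmonic i]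
    simp only [natDegree_pow, natDegree_X_sub_C, mul_one]
    have : ∑ i, (m + 1 - k i) + ∑ i, k i = Fintype.card I * (m + 1) := by
      rw [← Finset.sum_add_distrib, Finset.sum_congr rfl fun i _ => Nat.sub_add_cancel (hk i)]
      simp
    omega
  rw [Ring.prod_inverse_pow_eq isUnit_prod_algebraMap_X_sub_C hk, ← algebraMap_Pprod, ← mul_assoc,
    Kbasis_eq_awayBasis]
  convert algebraMap_mul_inverse_pow_mem_span_awayBasis monic_Pprod natDegree_Pprod m hdeg using 2
  simp

end

theorem Ksub_free :
    LinearIndependent (Rbase I) (Kbasis I) ∧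
      Submodule.span (Rbase I) (Set.range (Kbasis I)) = Ksub I :=
  ⟨linearIndependent_awayBasis monic_Pprod natDegree_Pprod,
    le_antisymm (Submodule.span_le.mpr (Set.range_subset_iff.mpr Kbasis_mem_Ksub))
      Ksub_le_span_Kbasis⟩
end
end

section
/- The R-module M is free with basis { t^{n−1}·(1−zt)^{−n} : n ≥ 1 }. -/
set_option synthInstance.maxHeartbeats 1000000
set_option maxHeartbeats 1000000

noncomputable section

open Polynomial

/-- `R = ℂ[z]`. -/
abbrev Rz := Polynomial ℂ

/-- `R[t]` (the outer variable `X` is `t`, the inner `X` is `z`). -/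
abbrev Rzt := Polynomial Rz

/-- `1 − z·t ∈ R[t]`. -/
def oneSubZT : Rzt := 1 - C X * X

/-- `S = R[t][(1−zt)⁻¹]`, the localization of `R[t]` at `1 − z·t`. -/
abbrev SlocZ := Localization.Away oneSubZT

/-- The `R`-submodule `M ⊆ S` spanned by the elements `tⁿ·(1−zt)^{−k}` over all `k ≥ 1` and
`0 ≤ n < k`. -/
def Msub : Submodule Rz SlocZ :=
  Submodule.span Rz
    {s | ∃ (k n : ℕ), 1 ≤ k ∧ n < k ∧
      s = algebraMap Rzt SlocZ (X ^ n) *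
        (Ring.inverse (algebraMap Rzt SlocZ oneSubZT)) ^ k}

/-- The proposed basis `{ t^{n−1}·(1−zt)^{−n} : n ≥ 1 }` of `M`. -/
def Mbasis (n : ℕ) : SlocZ :=
  algebraMap Rzt SlocZ (X ^ n) *
    (Ring.inverse (algebraMap Rzt SlocZ oneSubZT)) ^ (n + 1)

/-! ### Auxiliary lemmas -/

lemma oneSubZT_ne_zero : oneSubZT ≠ 0 := by
  intro h
  have := congrArg (fun p => Polynomial.coeff p 0) h
  simp [oneSubZT] at this

lemma algMap_inj : Function.Injective (algebraMap Rzt SlocZ) :=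
  IsLocalization.injective _ (powers_le_nonZeroDivisors_of_noZeroDivisors oneSubZT_ne_zero)

lemma isUnit_aZ : IsUnit (algebraMap Rzt SlocZ oneSubZT) :=
  IsLocalization.Away.algebraMap_isUnit oneSubZT

/-- shorthand for `(1−zt)⁻¹ ∈ S`. -/
abbrev uInv : SlocZ := Ring.inverse (algebraMap Rzt SlocZ oneSubZT)

lemma a_mul_u : algebraMap Rzt SlocZ oneSubZT * uInv = 1 :=
  Ring.mul_inverse_cancel _ isUnit_aZ

lemma u_mul_a : uInv * algebraMap Rzt SlocZ oneSubZT = 1 := by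
  rw [mul_comm]; exact a_mul_u

lemma u_key : uInv = 1 + (X : Rz) • (algebraMap Rzt SlocZ X * uInv) := by
  have h := a_mul_u
  have e : algebraMap Rzt SlocZ oneSubZT
      = 1 - algebraMap Rzt SlocZ (C X) * algebraMap Rzt SlocZ X := by
    show algebraMap Rzt SlocZ (1 - C X * X) = _
    rw [map_sub, map_one, map_mul]
  rw [Algebra.smul_def, IsScalarTower.algebraMap_apply Rz Rzt SlocZ,
    Polynomial.algebraMap_eq]
  linear_combination h - uInv * e

lemma basis_mul_pow (j m : ℕ) :
    Mbasis j * (algebraMap Rzt SlocZ oneSubZT) ^ (j + 1 + m)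
      = algebraMap Rzt SlocZ (X ^ j * oneSubZT ^ m) := by
  have hcancel : uInv ^ (j + 1) * (algebraMap Rzt SlocZ oneSubZT) ^ (j + 1) = 1 := by
    rw [← mul_pow, u_mul_a, one_pow]
  rw [Mbasis, map_mul, map_pow, map_pow]
  linear_combination
    (algebraMap Rzt SlocZ X ^ j * (algebraMap Rzt SlocZ oneSubZT) ^ m) * hcancel

lemma const_coeff_pow (m : ℕ) : (oneSubZT ^ m).coeff 0 = 1 := by
  simp [coeff_zero_eq_eval_zero, eval_pow, oneSubZT]

lemma coeff_lt (j i m : ℕ) (h : i < j) : (X ^ j * oneSubZT ^ m).coeff i = 0 := by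
  rw [mul_comm, coeff_mul_X_pow']
  simp [Nat.not_le.mpr h]

lemma coeff_eq (j m : ℕ) : (X ^ j * oneSubZT ^ m).coeff j = 1 := by
  rw [mul_comm, coeff_mul_X_pow']
  simp [coeff_zero_eq_eval_zero, eval_pow, oneSubZT]

lemma mem_span_aux (d : ℕ) : ∀ n : ℕ,
    algebraMap Rzt SlocZ (X ^ n) * uInv ^ (n + 1 + d) ∈
      Submodule.span Rz (Set.range Mbasis) := by
  induction d with
  | zero =>
    intro n
    exact Submodule.subset_span ⟨n, rfl⟩
  | succ d ih =>
    intro n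
    have key : algebraMap Rzt SlocZ (X ^ n) * uInv ^ (n + 1 + (d + 1))
        = algebraMap Rzt SlocZ (X ^ n) * uInv ^ (n + 1 + d)
          + (X : Rz) • (algebraMap Rzt SlocZ (X ^ (n + 1)) * uInv ^ ((n + 1) + 1 + d)) := by
      have hu := u_key
      rw [Algebra.smul_def, IsScalarTower.algebraMap_apply Rz Rzt SlocZ,
        Polynomial.algebraMap_eq] at hu ⊢
      rw [map_pow, map_pow]
      set t' := algebraMap Rzt SlocZ X
      set cz := algebraMap Rzt SlocZ (C X)
      linear_combination (t' ^ n * uInv ^ (n + 1 + d)) * hu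
    rw [key]
    exact Submodule.add_mem _ (ih n) (Submodule.smul_mem _ _ (ih (n + 1)))

/-- The `R = ℂ[z]`-module `M` is free with basis
`{ t^{n−1}·(1−zt)^{−n} : n ≥ 1 }`. -/
theorem Msub_free :
    LinearIndependent Rz Mbasis ∧
      Submodule.span Rz (Set.range Mbasis) = Msub := by
  constructor
  · rw [linearIndependent_iff']
    intro s g hsum i hi
    set N := s.sup id + 1 with hN
    have hiN : ∀ j ∈ s, j + 1 ≤ N := fun j hj =>
      Nat.succ_le_succ (Finset.le_sup (f := id) hj)
    have h2 : ∑ j ∈ s, g j • (algebraMap Rzt SlocZ (X ^ j * oneSubZT ^ (N - 1 - j))) = 0 := by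
      have h1 := congrArg (fun x => x * (algebraMap Rzt SlocZ oneSubZT) ^ N) hsum
      simp only [Finset.sum_mul, zero_mul, smul_mul_assoc] at h1
      have hcongr : ∀ j ∈ s, g j • (Mbasis j * (algebraMap Rzt SlocZ oneSubZT) ^ N)
          = g j • algebraMap Rzt SlocZ (X ^ j * oneSubZT ^ (N - 1 - j)) := by
        intro j hj
        congr 1
        have hsplit : j + 1 + (N - 1 - j) = N := by
          have := hiN j hj; omega
        conv_lhs => rw [← hsplit]
        exact basis_mul_pow j (N - 1 - j)
      rw [← Finset.sum_congr rfl hcongr]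
      exact h1
    have h3 : ∑ j ∈ s, C (g j) * (X ^ j * oneSubZT ^ (N - 1 - j)) = 0 := by
      apply algMap_inj
      rw [map_sum, map_zero]
      rw [← h2]
      apply Finset.sum_congr rfl
      intro j _
      rw [map_mul, Algebra.smul_def, IsScalarTower.algebraMap_apply Rz Rzt SlocZ,
        Polynomial.algebraMap_eq]
    clear hsum h2
    induction i using Nat.strong_induction_on with
    | _ i IH =>
      have hc := congrArg (fun p => Polynomial.coeff p i) h3
      simp only [Polynomial.finset_sum_coeff, Polynomial.coeff_zero, coeff_C_mul] at hc
      rw [Finset.sum_eq_single_of_mem i hi] at hc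
      · rwa [coeff_eq, mul_one] at hc
      · intro j hj hji
        rcases lt_or_gt_of_ne hji with h | h
        · rw [IH j h hj, zero_mul]
        · rw [coeff_lt j i _ h, mul_zero]
  · apply le_antisymm
    · rw [Submodule.span_le]
      rintro x ⟨n, rfl⟩
      exact Submodule.subset_span ⟨n + 1, n, Nat.le_add_left 1 n, Nat.lt_succ_self n, rfl⟩
    · rw [Msub, Submodule.span_le]
      rintro x ⟨k, n, hk, hn, rfl⟩
      have hd : k = n + 1 + (k - n - 1) := by omega
      rw [hd]
      exact mem_span_aux (k - n - 1) n
end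
end
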